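/- For every natural number n, the Möbius strip board 4″×(4+2n) does not admit a fault-free domino tiling. -/

import Mathlib

/-- Adjacency on the Möbius strip board `a″ × b` (height `a`, length `b`):
cells `(i,j)` and `(i+1,j)` (vertical neighbors), or `(i,j)` and `(i,j+1)`
(horizontal neighbors), or `(i, b-1)` and `(a-1-i, 0)` (horizontal neighbors
across the half-twisted seam). -/
def mobAdj (a b : ℕ) (c d : Fin a × Fin b) : Prop :=
  (c.2 = d.2 ∧ ((c.1 : ℕ) + 1 = (d.1 : ℕ) ∨ (d.1 : ℕ) + 1 = (c.1 : ℕ))) ∨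
  (c.1 = d.1 ∧ ((c.2 : ℕ) + 1 = (d.2 : ℕ) ∨ (d.2 : ℕ) + 1 = (c.2 : ℕ))) ∨
  ((c.2 : ℕ) = b - 1 ∧ (d.2 : ℕ) = 0 ∧ (d.1 : ℕ) = a - 1 - (c.1 : ℕ)) ∨
  ((d.2 : ℕ) = b - 1 ∧ (c.2 : ℕ) = 0 ∧ (c.1 : ℕ) = a - 1 - (d.1 : ℕ))

/-- A tiling of the Möbius strip board: a set of dominoes (unordered pairs of
adjacent cells) such that every cell belongs to exactly one domino. -/
def mobIsTiling (a b : ℕ) (T : Set (Sym2 (Fin a × Fin b))) : Prop :=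
  (∀ p ∈ T, ∃ c d, mobAdj a b c d ∧ p = s(c, d)) ∧
  (∀ x : Fin a × Fin b, ∃! p, p ∈ T ∧ x ∈ p)

/-- A tiling of the Möbius strip board is fault-free if:
* every horizontal fault-line indexed by `i` with `i + 1 < a` is crossed — because
  of the half-twist the cut between rows `i` and `i+1` is identified with the cut
  between rows `a-2-i` and `a-1-i`, so it is crossed by a vertical domino on rows
  `(k, k+1)` with `k = i` or `k = a-2-i`;
* every vertical fault-line between columns `j` and `j+1` (for `j + 1 < b`) is
  crossed by a horizontal domino `{(i,j),(i,j+1)}`;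
* the seam cut is crossed by a wrapping domino `{(i,b-1),(a-1-i,0)}`. -/
def mobFaultFree (a b : ℕ) (T : Set (Sym2 (Fin a × Fin b))) : Prop :=
  (∀ i : ℕ, i + 1 < a → ∃ c d : Fin a × Fin b,
      s(c, d) ∈ T ∧ c.2 = d.2 ∧ (d.1 : ℕ) = (c.1 : ℕ) + 1 ∧
      ((c.1 : ℕ) = i ∨ (c.1 : ℕ) = a - 2 - i)) ∧
  (∀ j : ℕ, j + 1 < b → ∃ c d : Fin a × Fin b,
      s(c, d) ∈ T ∧ c.1 = d.1 ∧ (c.2 : ℕ) = j ∧ (d.2 : ℕ) = j + 1) ∧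
  (∃ c d : Fin a × Fin b, s(c, d) ∈ T ∧ (c.2 : ℕ) = b - 1 ∧ (d.2 : ℕ) = 0 ∧
      (d.1 : ℕ) = a - 1 - (c.1 : ℕ))

/-- The Möbius strip board `a″ × b` admits a fault-free domino tiling. -/
def mobFaultFreeTileable (a b : ℕ) : Prop :=
  ∃ T : Set (Sym2 (Fin a × Fin b)), mobIsTiling a b T ∧ mobFaultFree a b T

/-!
Let `m` send each cell to the other cell of its domino, and record every domino by one of its
cells, its head. When `a` and `b` are even, a seam domino joins two cells of the same
checkerboard colour while every other domino is bichromatic; a colour class has even size, so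
the number of non-seam dominoes, and with it the number of seam dominoes, is even. The columns
`0, …, j` form a set of even size whose leaving dominoes are those across the cut after
column `j` together with all seam dominoes, so every internal cut is crossed an even number of
times. A fault-free tiling therefore has a vertical domino, at least two seam dominoes and at
least two dominoes across each of the `b - 1` internal cuts: at least `2b + 1` dominoes out of
`ab / 2`, which forces `a > 4`.
-/

open Finset Function

namespace Function.Involutive

variable {α : Type*} {g : α → α}

theorem even_card_of_mapsTo (hg : Involutive g) (hfix : ∀ x, g x ≠ x) {s : Finset α}
    (hs : ∀ x ∈ s, g x ∈ s) : Even #s := by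
  have h : ∑ _x ∈ s, (1 : ZMod 2) = 0 :=
    sum_involution (fun x _ => g x) (fun _ _ => by decide) (fun x _ _ => hfix x)
      (fun x hx => hs x hx) (fun x _ => hg x)
  rw [sum_const, nsmul_eq_mul, mul_one, ZMod.natCast_eq_zero_iff] at h
  exact even_iff_two_dvd.mpr h

theorem card_eq_two_mul_card_filter (hg : Involutive g) {s : Finset α} (hs : ∀ x ∈ s, g x ∈ s)
    {p : α → Prop} [DecidablePred p] (hp : ∀ x ∈ s, p (g x) ↔ ¬ p x) :
    #s = 2 * #{x ∈ s | p x} := by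
  have hswap : #{x ∈ s | ¬ p x} = #{x ∈ s | p x} := by
    refine card_nbij' g g ?_ ?_ (fun x _ => hg x) (fun x _ => hg x) <;>
      intro x hx <;> simp only [coe_filter, Set.mem_ofPred_eq] at hx ⊢
    · exact ⟨hs x hx.1, (hp x hx.1).2 hx.2⟩
    · exact ⟨hs x hx.1, fun h => (hp x hx.1).1 h hx.2⟩
  rw [← card_filter_add_card_filter_not p, hswap, two_mul]

theorem even_card_filter_not_mem_iff [DecidableEq α] (hg : Involutive g) (hfix : ∀ x, g x ≠ x)
    (s : Finset α) : Even #{x ∈ s | g x ∉ s} ↔ Even #s := by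
  have hin : Even #{x ∈ s | g x ∈ s} := hg.even_card_of_mapsTo hfix fun x hx => by
    simp only [mem_filter] at hx ⊢
    exact ⟨hx.2, by rw [hg x]; exact hx.1⟩
  rw [← card_filter_add_card_filter_not (fun x => g x ∈ s) (s := s), Nat.even_add]
  exact ⟨fun h => iff_of_true hin h, fun h => h.1 hin⟩

end Function.Involutive

section MobiusBoard

variable {a b : ℕ}

theorem mobAdj.symm {c d : Fin a × Fin b} (h : mobAdj a b c d) : mobAdj a b d c := by
  unfold mobAdj at h ⊢
  tauto

theorem mobAdj.ne (ha : Even a) {c d : Fin a × Fin b} (h : mobAdj a b c d) : c ≠ d := by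
  rintro rfl
  have := Nat.even_iff.mp ha
  simp only [mobAdj] at h
  omega

theorem mobIsTiling.exists_partner {T : Set (Sym2 (Fin a × Fin b))} (hT : mobIsTiling a b T) :
    ∃ m : Fin a × Fin b → Fin a × Fin b, Involutive m ∧ (∀ x, mobAdj a b x (m x)) ∧
      ∀ x y, s(x, y) ∈ T → y = m x := by
  obtain ⟨hdomino, hcover⟩ := hT
  have hpartner : ∀ x, ∃ y, s(x, y) ∈ T ∧ mobAdj a b x y := by
    intro x
    obtain ⟨p, ⟨hp, hxp⟩, -⟩ := hcover x
    obtain ⟨c, d, hcd, rfl⟩ := hdomino p hp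
    rcases Sym2.mem_iff.mp hxp with rfl | rfl
    · exact ⟨d, hp, hcd⟩
    · exact ⟨c, by rwa [Sym2.eq_swap], hcd.symm⟩
  choose m hmT hmadj using hpartner
  have huniq : ∀ x y, s(x, y) ∈ T → y = m x := by
    intro x y hxy
    obtain ⟨p, -, hp⟩ := hcover x
    exact Sym2.congr_right.mp ((hp _ ⟨hxy, Sym2.mem_mk_left x y⟩).trans
      (hp _ ⟨hmT x, Sym2.mem_mk_left x (m x)⟩).symm)
  exact ⟨m, fun x => (huniq (m x) x (by rw [Sym2.eq_swap]; exact hmT x)).symm, hmadj, huniq⟩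

theorem even_card_checkerboard (ha : Even a) (hb : Even b) :
    Even #{x : Fin a × Fin b | ((x.1 : ℕ) + x.2) % 2 = 0} := by
  have := Nat.even_iff.mp ha
  have := Nat.even_iff.mp hb
  refine (Fin.rev_involutive.prodMap Fin.rev_involutive).even_card_of_mapsTo
    (fun x hx => ?_) (fun x hx => ?_)
  · have := congrArg (fun y => (y.1 : ℕ)) hx
    simp only [Prod.map_fst, Fin.val_rev] at this
    omega
  · simp only [mem_filter, mem_univ, true_and, Prod.map_fst, Prod.map_snd, Fin.val_rev] at hx ⊢
    omega

theorem even_card_filter_snd_le (ha : Even a) (j : ℕ) :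
    Even #{x : Fin a × Fin b | (x.2 : ℕ) ≤ j} := by
  have := Nat.even_iff.mp ha
  refine (Fin.rev_involutive.prodMap (g := id) fun _ => rfl).even_card_of_mapsTo
    (fun x hx => ?_) (fun x hx => ?_)
  · have := congrArg (fun y => (y.1 : ℕ)) hx
    simp only [Prod.map_fst, Fin.val_rev] at this
    omega
  · simpa only [mem_filter, mem_univ, true_and, Prod.map_snd, id] using hx

variable (m : Fin a × Fin b → Fin a × Fin b)

def mobVertHeads : Finset (Fin a × Fin b) :=
  {x | ((m x).2 : ℕ) = x.2 ∧ ((m x).1 : ℕ) = x.1 + 1}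

def mobHorizHeads : Finset (Fin a × Fin b) :=
  {x | ((m x).1 : ℕ) = x.1 ∧ ((m x).2 : ℕ) = x.2 + 1}

def mobSeamHeads : Finset (Fin a × Fin b) :=
  {x | (x.2 : ℕ) = b - 1 ∧ ((m x).2 : ℕ) = 0 ∧ ((m x).1 : ℕ) = a - 1 - x.1}

theorem disjoint_mobVertHeads_mobHorizHeads : Disjoint (mobVertHeads m) (mobHorizHeads m) := by
  simp only [disjoint_left, mobVertHeads, mobHorizHeads, mem_filter, mem_univ, true_and]
  omega

theorem card_mobHorizHeads_eq_sum :
    #(mobHorizHeads m) = ∑ j ∈ range (b - 1), #{x ∈ mobHorizHeads m | (x.2 : ℕ) = j} := by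
  refine card_eq_sum_card_fiberwise fun x hx => ?_
  simp only [mobHorizHeads, coe_filter, mem_univ, true_and, Set.mem_ofPred_eq] at hx
  simp only [coe_range, Set.mem_Iio]
  omega

section Partner

variable {m} (hm : Involutive m) (hadj : ∀ x, mobAdj a b x (m x)) (ha : Even a)
include hm hadj ha

theorem partner_mem_mobHeads_iff (hb : Even b) (x : Fin a × Fin b) :
    m x ∈ mobVertHeads m ∪ mobHorizHeads m ∪ mobSeamHeads m ↔
      x ∉ mobVertHeads m ∪ mobHorizHeads m ∪ mobSeamHeads m := by
  have hx := hadj x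
  have := Nat.even_iff.mp ha
  have := Nat.even_iff.mp hb
  simp only [mobAdj, Fin.ext_iff] at hx
  simp only [mobVertHeads, mobHorizHeads, mobSeamHeads, mem_union, mem_filter, mem_univ,
    true_and, hm x]
  omega

theorem two_mul_card_mobHeads (hb : Even b) :
    2 * (#(mobVertHeads m) + #(mobHorizHeads m) + #(mobSeamHeads m)) = a * b := by
  have := Nat.even_iff.mp ha
  have := Nat.even_iff.mp hb
  have hVHW : Disjoint (mobVertHeads m ∪ mobHorizHeads m) (mobSeamHeads m) := by
    simp only [disjoint_left, mobVertHeads, mobHorizHeads, mobSeamHeads, mem_union, mem_filter,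
      mem_univ, true_and]
    omega
  have hcount := hm.card_eq_two_mul_card_filter (fun x _ => mem_univ (m x))
    (fun x _ => partner_mem_mobHeads_iff hm hadj ha hb x)
  rw [← card_union_of_disjoint (disjoint_mobVertHeads_mobHorizHeads m),
    ← card_union_of_disjoint hVHW]
  rwa [filter_mem_eq_inter, univ_inter, card_univ, Fintype.card_prod, Fintype.card_fin,
    Fintype.card_fin, eq_comm] at hcount

theorem even_card_mobVertHeads_add_card_mobHorizHeads (hb : Even b) :
    Even (#(mobVertHeads m) + #(mobHorizHeads m)) := by
  have := Nat.even_iff.mp ha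
  have := Nat.even_iff.mp hb
  set A : Finset (Fin a × Fin b) := {x | ((x.1 : ℕ) + x.2) % 2 = 0}
  have hA : Even #A := even_card_checkerboard ha hb
  set N : Finset (Fin a × Fin b) := {x | x ∈ A ↔ m x ∉ A}
  have hN : ∀ x ∈ N, m x ∈ N := by
    simp only [N, mem_filter, mem_univ, true_and, hm _]
    tauto
  -- Both the heads and the cells of `A` pick exactly one cell of each bichromatic domino.
  have hNA := hm.card_eq_two_mul_card_filter hN (p := (· ∈ A)) fun x hx => by
    simp only [N, mem_filter, mem_univ, true_and] at hx
    tauto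
  have hNheads := hm.card_eq_two_mul_card_filter hN
    (p := (· ∈ mobVertHeads m ∪ mobHorizHeads m ∪ mobSeamHeads m))
    fun x _ => partner_mem_mobHeads_iff hm hadj ha hb x
  have hflux : {x ∈ N | x ∈ A} = {x ∈ A | m x ∉ A} := by
    ext x
    simp only [N, mem_filter, mem_univ, true_and]
    tauto
  have hbichromatic : {x ∈ N | x ∈ mobVertHeads m ∪ mobHorizHeads m ∪ mobSeamHeads m} =
      mobVertHeads m ∪ mobHorizHeads m := by
    ext x
    have hx := hadj x
    simp only [mobAdj, Fin.ext_iff] at hx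
    simp only [N, A, mobVertHeads, mobHorizHeads, mobSeamHeads, mem_union, mem_filter,
      mem_univ, true_and]
    omega
  rw [← card_union_of_disjoint (disjoint_mobVertHeads_mobHorizHeads m), ← hbichromatic]
  have := (hm.even_card_filter_not_mem_iff (fun x => ((hadj x).ne ha).symm) A).mpr hA
  rw [← hflux, Nat.even_iff] at this
  rw [Nat.even_iff]
  omega

theorem even_card_mobHorizHeads_filter_add_card_mobSeamHeads {j : ℕ} (hj : j + 1 < b) :
    Even (#{x ∈ mobHorizHeads m | (x.2 : ℕ) = j} + #(mobSeamHeads m)) := by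
  have := Nat.even_iff.mp ha
  set L : Finset (Fin a × Fin b) := {x | (x.2 : ℕ) ≤ j}
  have hL : Even #L := even_card_filter_snd_le ha j
  set seamTails : Finset (Fin a × Fin b) := {x | m x ∈ mobSeamHeads m}
  have hflux : {x ∈ L | m x ∉ L} = {x ∈ mobHorizHeads m | (x.2 : ℕ) = j} ∪ seamTails := by
    ext x
    have hx := hadj x
    simp only [mobAdj, Fin.ext_iff] at hx
    simp only [L, seamTails, mobHorizHeads, mobSeamHeads, mem_union, mem_filter, mem_univ,
      true_and, hm x]
    omega
  have hdisj : Disjoint {x ∈ mobHorizHeads m | (x.2 : ℕ) = j} seamTails := by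
    simp only [disjoint_left, seamTails, mobHorizHeads, mobSeamHeads, mem_filter, mem_univ,
      true_and, hm _]
    omega
  have htails : #seamTails = #(mobSeamHeads m) :=
    card_nbij' m m (fun x hx => by simpa [seamTails] using hx)
      (fun x hx => by simpa [seamTails, hm x] using hx)
      (fun x _ => hm x) (fun x _ => hm x)
  rw [← htails, ← card_union_of_disjoint hdisj, ← hflux]
  exact (hm.even_card_filter_not_mem_iff (fun x => ((hadj x).ne ha).symm) L).mpr hL

theorem four_lt_of_mobPartner (hb : Even b) (hvert : (mobVertHeads m).Nonempty)
    (hhoriz : ∀ j, j + 1 < b → {x ∈ mobHorizHeads m | (x.2 : ℕ) = j}.Nonempty)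
    (hseam : (mobSeamHeads m).Nonempty) : 4 < a := by
  have htotal := two_mul_card_mobHeads hm hadj ha hb
  have hVH := Nat.even_iff.mp (even_card_mobVertHeads_add_card_mobHorizHeads hm hadj ha hb)
  have hfour : 4 ∣ a * b := by
    obtain ⟨k, rfl⟩ := ha
    obtain ⟨l, rfl⟩ := hb
    exact ⟨k * l, by ring⟩
  have hseam_even : #(mobSeamHeads m) % 2 = 0 := by omega
  have hcut : ∀ j ∈ range (b - 1), 2 ≤ #{x ∈ mobHorizHeads m | (x.2 : ℕ) = j} := by
    intro j hj
    have hj : j + 1 < b := by rw [mem_range] at hj; omega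
    have := Nat.even_iff.mp (even_card_mobHorizHeads_filter_add_card_mobSeamHeads hm hadj ha hj)
    have := (hhoriz j hj).card_pos
    omega
  have hhoriz_card : 2 * (b - 1) ≤ #(mobHorizHeads m) := by
    rw [card_mobHorizHeads_eq_sum]
    simpa [mul_comm] using sum_le_sum hcut
  have hb_pos : 0 < b := hseam.elim fun x _ => x.2.pos
  have := hvert.card_pos
  have := hseam.card_pos
  by_contra! h
  have := Nat.mul_le_mul_right b h
  omega

end Partner

theorem mobFaultFreeTileable.four_lt (h : mobFaultFreeTileable a b) (ha : Even a) (hb : Even b)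
    (ha₂ : 2 ≤ a) : 4 < a := by
  obtain ⟨T, hT, hrow, hcol, hseam⟩ := h
  obtain ⟨m, hm, hadj, hpartner⟩ := hT.exists_partner
  refine four_lt_of_mobPartner hm hadj ha hb ?_ (fun j hj => ?_) ?_
  · obtain ⟨c, d, hcd, hc, hd, -⟩ := hrow 0 (by omega)
    obtain rfl := hpartner c d hcd
    exact ⟨c, by simp [mobVertHeads, ← hc, hd]⟩
  · obtain ⟨c, d, hcd, hc, hcj, hdj⟩ := hcol j hj
    obtain rfl := hpartner c d hcd
    exact ⟨c, by simp [mobHorizHeads, ← hc, hcj, hdj]⟩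
  · obtain ⟨c, d, hcd, hc, hd, hd₁⟩ := hseam
    obtain rfl := hpartner c d hcd
    exact ⟨c, by simp [mobSeamHeads, hc, hd, hd₁]⟩

end MobiusBoard

/-- For every natural number `n`, the Möbius strip board `4″ × (4+2n)` does not
admit a fault-free domino tiling. -/
theorem mob_not_faultFree_4''42n :
    ∀ n : ℕ, ¬ mobFaultFreeTileable 4 (4 + 2 * n) := by
  intro n h
  exact lt_irrefl 4 (h.four_lt (by decide) ⟨n + 2, by omega⟩ le_add_self)
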